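/- arXiv:2509.08070 — 5 statements merged into one kernel-verified Lean document; each statement's English description precedes it below -/
import Mathlib

section
/- Let S be a binary refinement operator with locality range M_S. Then for every k ∈ ℕ, the k-fold composition S^k is local with locality range 2M_S; that is, S^k(𝒫)_{2^k j + r} for r ∈ {0,…,2^k−1} is independent of 𝒫_ℓ whenever ℓ < j − 2M_S or ℓ > j + 2M_S. -/
/-!
Induct on `k`, peeling off the first application: `S^[k+1] P = S^[k] (S P)`, and the position
`2^(k+1) j + r` of `S^[k+1] P` is the position `2^k j' + r'` of `S^[k] (S P)` with
`j' = 2j + q`, `q = r / 2^k ∈ {0, 1}`. It therefore suffices that `S P` and `S Q` agree on the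
window of radius `2M` around `j'`. A position `m` of that window has its parent `⌊m/2⌋` within
`M` of `j`, so the `M`-window around the parent lies in the `2M`-window around `j`.
-/

open Set

section Refinement

variable {Ω : Type*} {S : (ℤ → Ω) → (ℤ → Ω)} {M : ℕ}

theorem refine_apply_eq_of_eqOn
    (hloc : ∀ (P Q : ℤ → Ω) (j : ℤ),
      (∀ ℓ : ℤ, j - M ≤ ℓ → ℓ ≤ j + M → P ℓ = Q ℓ) →
      S P (2*j) = S Q (2*j) ∧ S P (2*j+1) = S Q (2*j+1))
    {P Q : ℤ → Ω} {m : ℤ} (h : EqOn P Q (Icc (m / 2 - M) (m / 2 + M))) :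
    S P m = S Q m := by
  have hPQ := hloc P Q (m / 2) fun ℓ h₁ h₂ => h ⟨h₁, h₂⟩
  rcases Int.emod_two_eq_zero_or_one m with heven | hodd
  · simpa only [show 2 * (m / 2) = m by omega] using hPQ.1
  · simpa only [show 2 * (m / 2) + 1 = m by omega] using hPQ.2

theorem eqOn_refine_of_eqOn
    (hloc : ∀ (P Q : ℤ → Ω) (j : ℤ),
      (∀ ℓ : ℤ, j - M ≤ ℓ → ℓ ≤ j + M → P ℓ = Q ℓ) →
      S P (2*j) = S Q (2*j) ∧ S P (2*j+1) = S Q (2*j+1))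
    {P Q : ℤ → Ω} {j q : ℤ} (hq₀ : 0 ≤ q) (hq₁ : q ≤ 1)
    (h : EqOn P Q (Icc (j - 2 * M) (j + 2 * M))) :
    EqOn (S P) (S Q) (Icc (2 * j + q - 2 * M) (2 * j + q + 2 * M)) := by
  rintro m ⟨hm₁, hm₂⟩
  exact refine_apply_eq_of_eqOn hloc fun ℓ ⟨hℓ₁, hℓ₂⟩ => h ⟨by omega, by omega⟩

end Refinement

theorem two_pow_succ_mul_add_eq {k r : ℕ} (j : ℤ) :
    (2 : ℤ) ^ (k + 1) * j + r = 2 ^ k * (2 * j + (r / 2 ^ k : ℕ)) + (r % 2 ^ k : ℕ) := by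
  have hr : (r : ℤ) = 2 ^ k * (r / 2 ^ k : ℕ) + (r % 2 ^ k : ℕ) := by
    exact_mod_cast (Nat.div_add_mod r _).symm
  rw [hr]
  ring

/-- a binary refinement operator with locality range `M` has all its powers
local with the uniform locality range `2M`. -/
theorem locality_of_powers {Ω : Type*} (S : (ℤ → Ω) → (ℤ → Ω)) (M : ℕ)
    (hloc : ∀ (P Q : ℤ → Ω) (j : ℤ),
      (∀ ℓ : ℤ, j - M ≤ ℓ → ℓ ≤ j + M → P ℓ = Q ℓ) →
      S P (2*j) = S Q (2*j) ∧ S P (2*j+1) = S Q (2*j+1)) :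
    ∀ (k : ℕ) (P Q : ℤ → Ω) (j : ℤ) (r : ℕ), r < 2^k →
      (∀ ℓ : ℤ, j - 2*M ≤ ℓ → ℓ ≤ j + 2*M → P ℓ = Q ℓ) →
      S^[k] P (2^k * j + r) = S^[k] Q (2^k * j + r) := by
  intro k
  induction k with
  | zero =>
    intro P Q j r hr h
    obtain rfl : r = 0 := by omega
    simpa using h j (by omega) (by omega)
  | succ k ih =>
    intro P Q j r hr h
    have hq : r / 2 ^ k < 2 := Nat.div_lt_of_lt_mul (by rwa [← pow_succ])
    have hSPQ := eqOn_refine_of_eqOn hloc (q := (r / 2 ^ k : ℕ)) (by positivity)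
      (by exact_mod_cast Nat.lt_succ_iff.mp hq)
      fun ℓ hℓ => h ℓ hℓ.1 hℓ.2
    rw [Function.iterate_succ_apply, Function.iterate_succ_apply, two_pow_succ_mul_add_eq]
    exact ih (S P) (S Q) _ _ (Nat.mod_lt _ (by positivity)) fun ℓ h₁ h₂ => hSPQ ⟨h₁, h₂⟩
end

section
/- For every k ∈ ℕ and r ∈ {0,…,2^k−1}, the refined value S^k(𝒫)_{2^k j + r} is independent of 𝒫_ℓ for ℓ < j + ⌊r/2^k − M_S^{[k]}⌋ and ℓ > j + ⌊r/2^k + M_S^{[k]}⌋, where M_S^{[k]} = Σ_{n=0}^{k−1} M_S/2^n = M_S(2 − 2^{1−k}). -/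
/-!
By induction on `k`, peeling off the first refinement step `S^[k+1] P = S^[k] (S P)`: the values of
`S^[k] P` on an index interval `[a, b]` depend only on `P` on `[⌊a/2^k − M^{[k]}⌋, ⌊b/2^k + M^{[k]}⌋]`.
One step of `S` pulls a window `[A, B]` for `S P` back to `[A/2 − M, B/2 + M]` for `P`, and since
`⌊⌊x⌋/2⌋ = ⌊x/2⌋` and `M^{[k+1]} = M + M^{[k]}/2`, the windows match exactly. The theorem is the case
`a = b = 2^k j + r`.
-/

open Set Function

def HasLocalityRange {Ω : Type*} (S : (ℤ → Ω) → ℤ → Ω) (M : ℕ) : Prop :=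
  ∀ (P Q : ℤ → Ω) (j : ℤ),
    (∀ ℓ : ℤ, j - M ≤ ℓ → ℓ ≤ j + M → P ℓ = Q ℓ) →
    S P (2 * j) = S Q (2 * j) ∧ S P (2 * j + 1) = S Q (2 * j + 1)

theorem Int.floor_div_two {K : Type*} [Field K] [LinearOrder K] [IsStrictOrderedRing K]
    [FloorRing K] (x : K) : ⌊x / 2⌋ = ⌊x⌋ / 2 := by
  exact_mod_cast Int.floor_div_natCast x 2

theorem Int.floor_mul_add_div_add {K : Type*} [Field K] [LinearOrder K] [IsStrictOrderedRing K]
    [FloorRing K] {d : K} (hd : d ≠ 0) (j : ℤ) (y x : K) :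
    ⌊(d * j + y) / d + x⌋ = j + ⌊y / d + x⌋ := by
  rw [← Int.floor_intCast_add, add_div, mul_div_cancel_left₀ _ hd, add_assoc]

theorem sum_range_succ_div_two_pow {K : Type*} [Semifield K] (c : K) (k : ℕ) :
    ∑ n ∈ Finset.range (k + 1), c / 2 ^ n = c + (∑ n ∈ Finset.range k, c / 2 ^ n) / 2 := by
  simp only [Finset.sum_range_succ', pow_succ, ← div_div, Finset.sum_div, pow_zero, div_one,
    add_comm]

namespace HasLocalityRange

variable {Ω : Type*} {S : (ℤ → Ω) → ℤ → Ω} {M : ℕ}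

theorem eqOn_Icc (hS : HasLocalityRange S M) {P Q : ℤ → Ω} {a b : ℤ}
    (h : EqOn P Q (Icc (a / 2 - M) (b / 2 + M))) : EqOn (S P) (S Q) (Icc a b) := by
  rintro ℓ ⟨haℓ, hℓb⟩
  have hwindow := hS P Q (ℓ / 2) fun i hi hi' => h ⟨by omega, by omega⟩
  rcases Int.even_or_odd' ℓ with ⟨m, rfl | rfl⟩
  · simpa using hwindow.1
  · rw [show (2 * m + 1) / 2 = m by omega] at hwindow
    exact hwindow.2

theorem iterate_eqOn_Icc (hS : HasLocalityRange S M) (k : ℕ) {P Q : ℤ → Ω} {a b : ℤ}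
    (h : EqOn P Q (Icc ⌊a / 2 ^ k - ∑ n ∈ Finset.range k, (M : ℝ) / 2 ^ n⌋
      ⌊b / 2 ^ k + ∑ n ∈ Finset.range k, (M : ℝ) / 2 ^ n⌋)) :
    EqOn (S^[k] P) (S^[k] Q) (Icc a b) := by
  induction k generalizing P Q with
  | zero => simpa using h
  | succ k ih =>
    rw [iterate_succ]
    refine ih (hS.eqOn_Icc ?_)
    set R := ∑ n ∈ Finset.range k, (M : ℝ) / 2 ^ n
    have hsum := sum_range_succ_div_two_pow (M : ℝ) k
    have hlo : (a : ℝ) / 2 ^ (k + 1) - ∑ n ∈ Finset.range (k + 1), (M : ℝ) / 2 ^ n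
        = (a / 2 ^ k - R) / 2 - M := by rw [hsum, pow_succ]; ring
    have hhi : (b : ℝ) / 2 ^ (k + 1) + ∑ n ∈ Finset.range (k + 1), (M : ℝ) / 2 ^ n
        = (b / 2 ^ k + R) / 2 + M := by rw [hsum, pow_succ]; ring
    rwa [hlo, hhi, Int.floor_sub_natCast, Int.floor_add_natCast, Int.floor_div_two,
      Int.floor_div_two] at h

end HasLocalityRange

/-- the refined value `S^k(𝒫)_{2^k j + r}` depends only on `𝒫_ℓ` for
`j + ⌊r/2^k − M_S^{[k]}⌋ ≤ ℓ ≤ j + ⌊r/2^k + M_S^{[k]}⌋`, where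
`M_S^{[k]} = ∑_{n<k} M_S/2^n`. -/
theorem locality_of_powers_refined {Ω : Type*} (S : (ℤ → Ω) → (ℤ → Ω)) (M : ℕ)
    (hloc : ∀ (P Q : ℤ → Ω) (j : ℤ),
      (∀ ℓ : ℤ, j - M ≤ ℓ → ℓ ≤ j + M → P ℓ = Q ℓ) →
      S P (2*j) = S Q (2*j) ∧ S P (2*j+1) = S Q (2*j+1)) :
    ∀ (k : ℕ) (P Q : ℤ → Ω) (j : ℤ) (r : ℕ), r < 2^k →
      (∀ ℓ : ℤ,
        j + ⌊(r : ℝ)/2^k - ∑ n ∈ Finset.range k, (M:ℝ)/2^n⌋ ≤ ℓ →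
        ℓ ≤ j + ⌊(r : ℝ)/2^k + ∑ n ∈ Finset.range k, (M:ℝ)/2^n⌋ →
        P ℓ = Q ℓ) →
      S^[k] P (2^k * j + r) = S^[k] Q (2^k * j + r) := by
  intro k P Q j r _ h
  have hfloor (x : ℝ) :
      ⌊((2 ^ k * j + r : ℤ) : ℝ) / 2 ^ k + x⌋ = j + ⌊(r : ℝ) / 2 ^ k + x⌋ := by
    push_cast
    exact Int.floor_mul_add_div_add (by positivity) j _ x
  refine HasLocalityRange.iterate_eqOn_Icc hloc k (fun ℓ hℓ => h ℓ ?_ ?_) ⟨le_rfl, le_rfl⟩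
  · simpa only [sub_eq_add_neg, hfloor] using hℓ.1
  · simpa only [hfloor] using hℓ.2
end

section
/- Let Γ : ℝ → Ω be Lipschitz with constant L_Γ into a complete metric space with intrinsic average, sampled at parameters with mesh h = sup_i |t^0_{i+1} − t^0_i|, with 𝒫^0_j = Γ(t^0_j). For the elementary scheme S with primal parameterization (ζ = 1/2), the refined points satisfy by induction d(p^k_{2^k j + r−1}, p^k_{2^k j + r}) ≤ 2^{−k} L_Γ h for all r ∈ {1,…,2^k−1} and k ∈ ℕ, and consequently d(p^0_j, p^k_{2^k j + r}) ≤ L_Γ h for all r ∈ {0,…,2^k−1}. -/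
/-- induction estimates for the elementary scheme with an intrinsic average
applied to samples of a Lipschitz curve. -/
theorem elementary_scheme_approx_induction {Ω : Type*} [MetricSpace Ω]
    (A : ℝ → Ω → Ω → Ω)
    (hmetric : ∀ ω ∈ Set.Icc (0:ℝ) 1, ∀ x y : Ω, dist x (A ω x y) = ω * dist x y)
    (hmetric' : ∀ ω ∈ Set.Icc (0:ℝ) 1, ∀ x y : Ω, dist (A ω x y) y = (1 - ω) * dist x y)
    (S : (ℤ → Ω) → (ℤ → Ω))
    (hS : ∀ (P : ℤ → Ω) (j : ℤ),
      S P (2*j) = P j ∧ S P (2*j+1) = A (1/2) (P j) (P (j+1)))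
    (Γ : ℝ → Ω) (LΓ : ℝ) (hLΓ : 0 ≤ LΓ)
    (hLip : ∀ x y : ℝ, dist (Γ x) (Γ y) ≤ LΓ * |x - y|)
    (T0 : ℤ → ℝ) (hT0 : StrictMono T0)
    (h : ℝ) (hmesh : ∀ i : ℤ, |T0 (i+1) - T0 i| ≤ h)
    (P0 : ℤ → Ω) (hP0 : ∀ j : ℤ, P0 j = Γ (T0 j)) :
    (∀ (k : ℕ) (j : ℤ) (r : ℕ), 1 ≤ r → r ≤ 2^k - 1 →
      dist (S^[k] P0 (2^k * j + r - 1)) (S^[k] P0 (2^k * j + r)) ≤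
        (1/2:ℝ)^k * LΓ * h) ∧
    (∀ (k : ℕ) (j : ℤ) (r : ℕ), r < 2^k →
      dist (P0 j) (S^[k] P0 (2^k * j + r)) ≤ LΓ * h) := by
  have hhalf : (1/2:ℝ) ∈ Set.Icc (0:ℝ) 1 := by norm_num
  have hpos : (0:ℝ) ≤ h := le_trans (abs_nonneg _) (hmesh 0)
  -- consecutive distances at level k
  have key : ∀ (k : ℕ) (i : ℤ),
      dist (S^[k] P0 i) (S^[k] P0 (i+1)) ≤ (1/2:ℝ)^k * LΓ * h := by
    intro k
    induction k with
    | zero =>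
      intro i
      simp only [Function.iterate_zero, id_eq, pow_zero, one_mul, hP0]
      calc dist (Γ (T0 i)) (Γ (T0 (i+1))) ≤ LΓ * |T0 i - T0 (i+1)| := hLip _ _
        _ ≤ LΓ * h := by
            rw [abs_sub_comm]
            exact mul_le_mul_of_nonneg_left (hmesh i) hLΓ
    | succ k ih =>
      intro i
      rw [Function.iterate_succ_apply']
      rcases Int.even_or_odd i with ⟨j, hj⟩ | ⟨j, hj⟩
      · have h1 : i = 2*j := by omega
        have h2 : i + 1 = 2*j + 1 := by omega
        rw [h2, h1, (hS _ j).1, (hS _ j).2, hmetric _ hhalf]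
        have h3 := mul_le_mul_of_nonneg_left (ih j) (by norm_num : (0:ℝ) ≤ 1/2)
        rw [pow_succ]; linarith
      · have h1 : i = 2*j + 1 := by omega
        have h2 : i + 1 = 2*(j+1) := by omega
        rw [h2, h1, (hS _ j).2, (hS _ (j+1)).1, hmetric' _ hhalf]
        have h3 := mul_le_mul_of_nonneg_left (ih j) (by norm_num : (0:ℝ) ≤ 1/2)
        rw [pow_succ]; linarith
  -- index persistence
  have key2 : ∀ (k : ℕ) (j : ℤ), S^[k] P0 (2^k * j) = P0 j := by
    intro k
    induction k with
    | zero => intro j; simp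
    | succ k ih =>
      intro j
      rw [Function.iterate_succ_apply']
      have hj : (2:ℤ)^(k+1) * j = 2 * (2^k * j) := by ring
      rw [hj, (hS _ _).1, ih]
  -- chaining
  have chain : ∀ (k : ℕ) (m : ℤ) (r : ℕ),
      dist (S^[k] P0 m) (S^[k] P0 (m + r)) ≤ r * ((1/2:ℝ)^k * LΓ * h) := by
    intro k m r
    induction r with
    | zero => simp
    | succ r ih =>
      have hcast : m + ((r:ℕ)+1 : ℕ) = (m + r) + 1 := by push_cast; ring
      calc dist (S^[k] P0 m) (S^[k] P0 (m + ((r:ℕ)+1 : ℕ)))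
          ≤ dist (S^[k] P0 m) (S^[k] P0 (m + r))
            + dist (S^[k] P0 (m + r)) (S^[k] P0 ((m + r) + 1)) := by
            rw [hcast]; exact dist_triangle _ _ _
        _ ≤ r * ((1/2:ℝ)^k * LΓ * h) + (1/2:ℝ)^k * LΓ * h :=
            add_le_add ih (key k _)
        _ = ((r:ℕ)+1 : ℕ) * ((1/2:ℝ)^k * LΓ * h) := by push_cast; ring
  constructor
  · intro k j r hr1 hr2
    have := key k (2^k * j + r - 1)
    rw [show (2^k * j + (r:ℤ) - 1) + 1 = 2^k * j + r by ring] at this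
    exact this
  · intro k j r hr
    have hc := chain k (2^k * j) r
    rw [key2 k j] at hc
    refine hc.trans ?_
    have hr' : (r:ℝ) ≤ 2^k := by exact_mod_cast hr.le
    have h1 : (r:ℝ) * (1/2:ℝ)^k ≤ 1 := by
      have h2 : ((2:ℝ)^k) * (1/2:ℝ)^k = 1 := by
        rw [← mul_pow]; norm_num
      nlinarith [pow_pos (by norm_num : (0:ℝ) < 1/2) k]
    nlinarith [mul_nonneg hLΓ hpos]
end

section
/- Under the conditions of the approximation theorem (Γ Lipschitz with constant L_Γ, 𝒫^0_j = Γ(t^0_j), h the initial mesh, S elementary with intrinsic average, ζ = 1/2), the limit curve satisfies d(Γ(t), S^∞(𝒫^0)(t)) ≤ 2 L_Γ h for all t ∈ ℝ. -/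
open Filter Topology

/-- the limit curve of the elementary scheme with an intrinsic average,
run on samples of an `L_Γ`-Lipschitz curve with primal parameterization (ζ = 1/2),
approximates the curve with error at most `2 L_Γ h`. -/
theorem elementary_scheme_approx_order {Ω : Type*} [MetricSpace Ω] [CompleteSpace Ω]
    (A : ℝ → Ω → Ω → Ω)
    (hmetric : ∀ ω ∈ Set.Icc (0:ℝ) 1, ∀ x y : Ω, dist x (A ω x y) = ω * dist x y)
    (hmetric' : ∀ ω ∈ Set.Icc (0:ℝ) 1, ∀ x y : Ω, dist (A ω x y) y = (1 - ω) * dist x y)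
    (S : (ℤ → Ω) → (ℤ → Ω))
    (hS : ∀ (P : ℤ → Ω) (j : ℤ),
      S P (2*j) = P j ∧ S P (2*j+1) = A (1/2) (P j) (P (j+1)))
    (Γ : ℝ → Ω) (LΓ : ℝ) (hLΓ : 0 ≤ LΓ)
    (hLip : ∀ x y : ℝ, dist (Γ x) (Γ y) ≤ LΓ * |x - y|)
    -- primal parameterization: `T 0 = T0`, `T(k+1)` is the midpoint refinement of `T k`
    (T : ℕ → ℤ → ℝ) (hTmono : ∀ k, StrictMono (T k))
    (hTe : ∀ (k : ℕ) (j : ℤ), T (k+1) (2*j) = T k j)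
    (hTo : ∀ (k : ℕ) (j : ℤ), T (k+1) (2*j+1) = (T k j + T k (j+1)) / 2)
    (h : ℝ) (hmesh : ∀ i : ℤ, |T 0 (i+1) - T 0 i| ≤ h)
    (hcov : ∀ (k : ℕ) (t : ℝ), ∃ j : ℤ, t ∈ Set.Ico (T k j) (T k (j+1)))
    (P0 : ℤ → Ω) (hP0 : ∀ j : ℤ, P0 j = Γ (T 0 j))
    -- the piecewise average interpolants of the refined data
    (f : ℕ → ℝ → Ω)
    (hf : ∀ (k : ℕ) (j : ℤ), ∀ t ∈ Set.Ico (T k j) (T k (j+1)),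
      f k t = A ((t - T k j) / (T k (j+1) - T k j)) (S^[k] P0 j) (S^[k] P0 (j+1)))
    -- the limit curve `S^∞(𝒫⁰)`
    (G : ℝ → Ω)
    (hG : ∀ t : ℝ, Tendsto (fun k => f k t) atTop (nhds (G t))) :
    ∀ t : ℝ, dist (Γ t) (G t) ≤ 2 * LΓ * h := by
  have h0 : 0 ≤ h := (abs_nonneg _).trans (hmesh 0)
  have hLh : 0 ≤ LΓ * h := mul_nonneg hLΓ h0
  -- mesh bound
  have mesh : ∀ (k : ℕ) (j : ℤ), T k (j+1) - T k j ≤ h / 2^k := by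
    intro k
    induction k with
    | zero =>
      intro j
      simpa using (le_abs_self _).trans (hmesh j)
    | succ k ih =>
      intro j
      rcases Int.even_or_odd j with ⟨m, hm⟩ | ⟨m, hm⟩
      · have hm' : j = 2*m := by omega
        subst hm'
        have h2 : T (k+1) (2*m+1) = (T k m + T k (m+1))/2 := hTo k m
        have h1 : T (k+1) (2*m) = T k m := hTe k m
        have := ih m
        rw [h2, h1, pow_succ, ← div_div]
        linarith
      · have hm' : j = 2*m+1 := by omega
        subst hm'
        have h1 : T (k+1) (2*m+1+1) = T k (m+1) := by
          have e : (2*m+1+1 : ℤ) = 2*(m+1) := by ring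
          rw [e]; exact hTe k (m+1)
        have h2 : T (k+1) (2*m+1) = (T k m + T k (m+1))/2 := hTo k m
        have := ih m
        rw [h1, h2, pow_succ, ← div_div]
        linarith
  have half_mem : (1/2 : ℝ) ∈ Set.Icc (0:ℝ) 1 := by norm_num
  -- diameter bound
  have hd : ∀ (k : ℕ) (j : ℤ), dist (S^[k] P0 j) (S^[k] P0 (j+1)) ≤ LΓ * h / 2^k := by
    intro k
    induction k with
    | zero =>
      intro j
      simp only [Function.iterate_zero, id_eq, pow_zero, div_one]
      rw [hP0, hP0]
      calc dist (Γ (T 0 j)) (Γ (T 0 (j+1))) ≤ LΓ * |T 0 j - T 0 (j+1)| := hLip _ _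
        _ ≤ LΓ * h := by
            apply mul_le_mul_of_nonneg_left _ hLΓ
            rw [abs_sub_comm]; exact hmesh j
    | succ k ih =>
      intro j
      rw [Function.iterate_succ_apply']
      set Q := S^[k] P0 with hQ
      rcases Int.even_or_odd j with ⟨m, hm⟩ | ⟨m, hm⟩
      · have hm' : j = 2*m := by omega
        subst hm'
        rw [(hS Q m).1, (hS Q m).2, hmetric (1/2) half_mem (Q m) (Q (m+1)),
          pow_succ, ← div_div]
        have := ih m
        linarith
      · have hm' : j = 2*m+1 := by omega
        subst hm'
        have e : (2*m+1+1 : ℤ) = 2*(m+1) := by ring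
        rw [(hS Q m).2, e, (hS Q (m+1)).1,
          hmetric' (1/2) half_mem (Q m) (Q (m+1)), pow_succ, ← div_div]
        have := ih m
        linarith
  -- vertex error bound
  have hC : ∀ (k : ℕ) (j : ℤ), dist (S^[k] P0 j) (Γ (T k j)) ≤ 2*LΓ*h - 2*LΓ*h/2^k := by
    intro k
    induction k with
    | zero =>
      intro j
      simp [hP0 j]
    | succ k ih =>
      intro j
      have hpow : (0:ℝ) < 2^k := by positivity
      have hmono : 2*LΓ*h - 2*LΓ*h/2^k ≤ 2*LΓ*h - 2*LΓ*h/2^(k+1) := by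
        rw [pow_succ, ← div_div]
        have : 0 ≤ 2*LΓ*h/2^k := by positivity
        linarith
      rw [Function.iterate_succ_apply']
      set Q := S^[k] P0 with hQ
      rcases Int.even_or_odd j with ⟨m, hm⟩ | ⟨m, hm⟩
      · have hm' : j = 2*m := by omega
        subst hm'
        rw [(hS Q m).1, hTe k m]
        exact (ih m).trans hmono
      · have hm' : j = 2*m+1 := by omega
        subst hm'
        rw [(hS Q m).2, hTo k m]
        have hdm := hd k m
        have hCm := ih m
        have hmid : dist (Γ (T k m)) (Γ ((T k m + T k (m+1))/2))
            ≤ LΓ * (h/2^k) / 2 := by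
          have hlt : T k m < T k (m+1) := hTmono k (lt_add_one m)
          have habs : |T k m - (T k m + T k (m+1))/2| = (T k (m+1) - T k m)/2 := by
            rw [abs_sub_comm, abs_of_nonneg (by linarith)]
            ring
          calc dist (Γ (T k m)) (Γ ((T k m + T k (m+1))/2))
              ≤ LΓ * |T k m - (T k m + T k (m+1))/2| := hLip _ _
            _ = LΓ * ((T k (m+1) - T k m)/2) := by rw [habs]
            _ ≤ LΓ * (h/2^k) / 2 := by
                rw [mul_div_assoc]
                apply mul_le_mul_of_nonneg_left _ hLΓ
                have := mesh k m
                linarith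
        have hA : dist (A (1/2) (Q m) (Q (m+1))) (Q m) = (1/2) * dist (Q m) (Q (m+1)) := by
          rw [dist_comm]
          exact hmetric (1/2) half_mem (Q m) (Q (m+1))
        calc dist (A (1/2) (Q m) (Q (m+1))) (Γ ((T k m + T k (m+1))/2))
            ≤ dist (A (1/2) (Q m) (Q (m+1))) (Q m) + dist (Q m) (Γ (T k m))
              + dist (Γ (T k m)) (Γ ((T k m + T k (m+1))/2)) := dist_triangle4 _ _ _ _
          _ ≤ (1/2) * (LΓ * h / 2^k) + (2*LΓ*h - 2*LΓ*h/2^k) + LΓ * (h/2^k) / 2 := by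
              rw [hA]
              have hdm' : (1/2) * dist (Q m) (Q (m+1)) ≤ (1/2) * (LΓ * h / 2^k) := by
                linarith
              linarith
          _ ≤ 2*LΓ*h - 2*LΓ*h/2^(k+1) := by
              rw [pow_succ, ← div_div, mul_div_assoc, mul_div_assoc]
              have : LΓ * (h/2^k) = LΓ*h/2^k := by ring
              rw [this]
              linarith
  intro t
  have key : ∀ k : ℕ, dist (Γ t) (f k t) ≤ 2 * LΓ * h := by
    intro k
    obtain ⟨j, hj⟩ := hcov k t
    have hab : T k j < T k (j+1) := hTmono k (lt_add_one j)
    have hfk := hf k j t hj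
    rw [hfk]
    set ω := (t - T k j)/(T k (j+1) - T k j) with hω
    have hω0 : 0 ≤ ω := div_nonneg (by linarith [hj.1]) (by linarith)
    have hω1 : ω ≤ 1 := (div_le_one (by linarith)).2 (by linarith [hj.2])
    have hAx : dist (S^[k] P0 j) (A ω (S^[k] P0 j) (S^[k] P0 (j+1)))
        = ω * dist (S^[k] P0 j) (S^[k] P0 (j+1)) := hmetric ω ⟨hω0, hω1⟩ _ _
    have hdj := hd k j
    have hCj := hC k j
    have hmesh' := mesh k j
    have ht : dist (Γ t) (Γ (T k j)) ≤ LΓ * h / 2^k := by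
      calc dist (Γ t) (Γ (T k j)) ≤ LΓ * |t - T k j| := hLip _ _
        _ ≤ LΓ * (h/2^k) := by
            apply mul_le_mul_of_nonneg_left _ hLΓ
            rw [abs_of_nonneg (by linarith [hj.1])]
            linarith [hj.2]
        _ = LΓ * h / 2^k := by ring
    have hωd : ω * dist (S^[k] P0 j) (S^[k] P0 (j+1)) ≤ LΓ * h / 2^k := by
      calc ω * dist (S^[k] P0 j) (S^[k] P0 (j+1))
          ≤ 1 * dist (S^[k] P0 j) (S^[k] P0 (j+1)) :=
            mul_le_mul_of_nonneg_right hω1 dist_nonneg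
        _ = dist (S^[k] P0 j) (S^[k] P0 (j+1)) := one_mul _
        _ ≤ LΓ * h / 2^k := hdj
    calc dist (Γ t) (A ω (S^[k] P0 j) (S^[k] P0 (j+1)))
        ≤ dist (Γ t) (Γ (T k j)) + dist (Γ (T k j)) (S^[k] P0 j)
          + dist (S^[k] P0 j) (A ω (S^[k] P0 j) (S^[k] P0 (j+1))) := dist_triangle4 _ _ _ _
      _ ≤ LΓ * h / 2^k + (2*LΓ*h - 2*LΓ*h/2^k) + LΓ * h / 2^k := by
          rw [hAx, dist_comm (Γ (T k j))]
          linarith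
      _ ≤ 2 * LΓ * h := by
          have e : 2*LΓ*h/2^k = 2*(LΓ*h/2^k) := by ring
          linarith
  exact le_of_tendsto (tendsto_const_nhds.dist (hG t)) (Filter.Eventually.of_forall key)
end

section
/- Let S, W be subdivision schemes on Ω^ℤ such that S^L has contractivity factor μ ∈ (0,1) (δ(S^L(𝒫)) ≤ μ δ(𝒫) on 𝒟), W maps 𝒟 into itself, and S^L, W^L are in first-type proximity on 𝒟 with constants C > 0 and ε > 0: sup_i d(S^L(𝒫)_i, W^L(𝒫)_i) ≤ C (δ(𝒫))^{1+ε}. Then for all ℓ ≥ L and 𝒫 ∈ 𝒟, δ(W^ℓ(𝒫)) ≤ μ δ(W^{ℓ−L}(𝒫)) + 2C (δ(W^{ℓ−L}(𝒫)))^{1+ε}. -/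
/-- `δ(𝒫) = sup_j d(p_j, p_{j+1})`. -/
noncomputable def delta {Ω : Type*} [MetricSpace Ω] (P : ℤ → Ω) : ℝ :=
  ⨆ j : ℤ, dist (P j) (P (j + 1))

lemma delta_nonneg {Ω : Type*} [MetricSpace Ω] (P : ℤ → Ω) : 0 ≤ delta P :=
  Real.iSup_nonneg fun _ => dist_nonneg

/-- the basic recursion derived from first-type proximity. -/
theorem first_type_proximity_recursion {Ω : Type*} [MetricSpace Ω]
    (S W : (ℤ → Ω) → (ℤ → Ω)) (D : Set (ℤ → Ω))
    (hWD : ∀ P ∈ D, W P ∈ D)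
    (L : ℕ) (hL : 0 < L) (μ : ℝ) (hμ : μ ∈ Set.Ioo (0:ℝ) 1)
    (hcontr : ∀ P ∈ D, delta (S^[L] P) ≤ μ * delta P)
    (C ε : ℝ) (hC : 0 < C) (hε : 0 < ε)
    (hprox : ∀ P ∈ D, ∀ i : ℤ,
      dist (S^[L] P i) (W^[L] P i) ≤ C * (delta P) ^ ((1:ℝ) + ε)) :
    ∀ P ∈ D, ∀ ℓ : ℕ, L ≤ ℓ →
      delta (W^[ℓ] P) ≤
        μ * delta (W^[ℓ - L] P) + 2 * C * (delta (W^[ℓ - L] P)) ^ ((1:ℝ) + ε) := by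
  intro P hP ℓ hℓ
  set Q : ℤ → Ω := W^[ℓ - L] P with hQdef
  have hQD : Q ∈ D := by
    rw [hQdef]
    induction (ℓ - L) with
    | zero => simpa using hP
    | succ n ih => rw [Function.iterate_succ_apply']; exact hWD _ ih
  have hiter : W^[ℓ] P = W^[L] Q := by
    rw [hQdef, ← Function.iterate_add_apply]
    congr 1
    omega
  rw [hiter]
  have hδQ : 0 ≤ delta Q := delta_nonneg Q
  have hpow : 0 ≤ (delta Q) ^ ((1:ℝ) + ε) := Real.rpow_nonneg hδQ _
  have hRHS : 0 ≤ μ * delta Q + 2 * C * (delta Q) ^ ((1:ℝ) + ε) := by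
    have := hμ.1.le
    positivity
  by_cases hbdd : BddAbove (Set.range fun j : ℤ =>
      dist (W^[L] Q j) (W^[L] Q (j + 1)))
  · -- the S-family is also bounded above
    have hbddS : BddAbove (Set.range fun j : ℤ =>
        dist (S^[L] Q j) (S^[L] Q (j + 1))) := by
      obtain ⟨M, hM⟩ := hbdd
      refine ⟨M + 2 * (C * (delta Q) ^ ((1:ℝ) + ε)), ?_⟩
      rintro x ⟨j, rfl⟩
      have h1 := hprox Q hQD j
      have h2 := hprox Q hQD (j + 1)
      have h3 : dist (W^[L] Q j) (W^[L] Q (j + 1)) ≤ M :=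
        hM ⟨j, rfl⟩
      calc dist (S^[L] Q j) (S^[L] Q (j + 1))
          ≤ dist (S^[L] Q j) (W^[L] Q j) + dist (W^[L] Q j) (W^[L] Q (j + 1))
            + dist (W^[L] Q (j + 1)) (S^[L] Q (j + 1)) := dist_triangle4 _ _ _ _
        _ ≤ C * (delta Q) ^ ((1:ℝ) + ε) + M + C * (delta Q) ^ ((1:ℝ) + ε) := by
            rw [dist_comm (W^[L] Q (j+1))]
            gcongr
        _ = M + 2 * (C * (delta Q) ^ ((1:ℝ) + ε)) := by ring
    refine Real.iSup_le (fun j => ?_) hRHS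
    have hS : dist (S^[L] Q j) (S^[L] Q (j + 1)) ≤ delta (S^[L] Q) :=
      le_ciSup hbddS j
    have h1 := hprox Q hQD j
    have h2 := hprox Q hQD (j + 1)
    calc dist (W^[L] Q j) (W^[L] Q (j + 1))
        ≤ dist (W^[L] Q j) (S^[L] Q j) + dist (S^[L] Q j) (S^[L] Q (j + 1))
          + dist (S^[L] Q (j + 1)) (W^[L] Q (j + 1)) := dist_triangle4 _ _ _ _
      _ ≤ C * (delta Q) ^ ((1:ℝ) + ε) + μ * delta Q + C * (delta Q) ^ ((1:ℝ) + ε) := by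
          rw [dist_comm (W^[L] Q j)]
          gcongr
          exact hS.trans (hcontr Q hQD)
      _ = μ * delta Q + 2 * C * (delta Q) ^ ((1:ℝ) + ε) := by ring
  · rw [delta, Real.iSup_of_not_bddAbove hbdd]
    exact hRHS
end
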